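/- The elementary phase E_el with parameter w, |w| < 1, and distinct indices s ≠ t, defined by E_el(X) = (ℓ(X)/(2π))I + w·(1/(2π))∫_X e^{i(s−t)x}dx |s⟩⟨t| + \bar{w}·(1/(2π))∫_X e^{i(t−s)x}dx |t⟩⟨s|, satisfies ‖E_el(X)‖ < 1 whenever E_el(X) ≠ I; indeed ‖E_el(X)‖ = ℓ(X)/(2π) + |w|·|(1/(2π))∫_X e^{i(s−t)x}dx|. -/

import Mathlib

/-!
Writing `a = ℓ(X)/(2π)` and `p = phaseInt X s t`, the operator is `a • 1` plus the self-adjoint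
rank-two operator `c |s⟩⟨t| + c̄ |t⟩⟨s|` with `c = w p`. The latter has norm `|c|` (Pythagoras and
Bessel), attained at `e_s + ζ e_t` with `c ζ = |c|`, which is then an eigenvector of the whole
operator; hence `‖E(X)‖ = a + |c|`. For `s ≠ t` the phase integrates to zero over a full period,
so `p` is minus the integral over `[0, 2π) \ X` and `|p| ≤ 1 - a`. Thus `a + |w| |p| ≤ 1`, with
equality only if `p = 0` and `a = 1`, that is `E(X) = 1`.
-/

open MeasureTheory Complex

/-- `phaseInt X n m = (1/2π) ∫_X e^{i(n-m)x} dx`. -/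
noncomputable def phaseInt (X : Set ℝ) (n m : ℕ) : ℂ :=
  ((1 / (2 * Real.pi) : ℝ) : ℂ) *
    ∫ x in X, Complex.exp (Complex.I * ((n : ℂ) - (m : ℂ)) * (x : ℂ))

open scoped InnerProductSpace ComplexConjugate

section RankTwoPerturbation

variable {H ι : Type*} [NormedAddCommGroup H] [InnerProductSpace ℂ H]
  {v : ι → H} {s t : ι}

lemma Orthonormal.norm_smul_add_smul_sq (hv : Orthonormal ℂ v) (hst : s ≠ t) (α β : ℂ) :
    ‖α • v s + β • v t‖ ^ 2 = ‖α‖ ^ 2 + ‖β‖ ^ 2 := by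
  simp only [sq]
  rw [norm_add_sq_eq_norm_sq_add_norm_sq_of_inner_eq_zero _ _
    (by rw [inner_smul_left, inner_smul_right, hv.2 hst, mul_zero, mul_zero]),
    norm_smul, norm_smul, hv.1 s, hv.1 t, mul_one, mul_one]

lemma Orthonormal.norm_smul_inner_add_le (hv : Orthonormal ℂ v) (hst : s ≠ t) (c : ℂ) (φ : H) :
    ‖c • (⟪v t, φ⟫_ℂ • v s) + conj c • (⟪v s, φ⟫_ℂ • v t)‖ ≤ ‖c‖ * ‖φ‖ := by
  classical
  have hBessel := hv.sum_inner_products_le (s := {s, t}) φ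
  rw [Finset.sum_pair hst] at hBessel
  rw [smul_smul, smul_smul, ← pow_le_pow_iff_left₀ (norm_nonneg _) (by positivity) two_ne_zero,
    hv.norm_smul_add_smul_sq hst, norm_mul, norm_mul, Complex.norm_conj, mul_pow, mul_pow,
    mul_pow, ← mul_add, add_comm]
  gcongr

lemma Orthonormal.exists_smul_inner_add_eq_norm_smul (hv : Orthonormal ℂ v) (hst : s ≠ t)
    (c : ℂ) : ∃ φ : H, φ ≠ 0 ∧
      c • (⟪v t, φ⟫_ℂ • v s) + conj c • (⟪v s, φ⟫_ℂ • v t) = (‖c‖ : ℂ) • φ := by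
  obtain ⟨ζ, hcζ, hconj⟩ : ∃ ζ : ℂ, c * ζ = ‖c‖ ∧ conj c = ‖c‖ * ζ := by
    rcases eq_or_ne c 0 with rfl | hc
    · exact ⟨0, by simp⟩
    · have : (‖c‖ : ℂ) ≠ 0 := by exact_mod_cast norm_ne_zero_iff.mpr hc
      refine ⟨conj c / ‖c‖, ?_, by field_simp⟩
      rw [mul_div_assoc', Complex.mul_conj', sq, mul_div_cancel_right₀ _ this]
  have hs : ⟪v s, v s + ζ • v t⟫_ℂ = 1 := by
    simp [hv.2 hst, hv.1 s]
  have ht : ⟪v t, v s + ζ • v t⟫_ℂ = ζ := by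
    simp [hv.2 hst.symm, hv.1 t]
  refine ⟨v s + ζ • v t, fun h ↦ by simp [h] at hs, ?_⟩
  rw [hs, ht, smul_smul, hcζ, hconj, smul_smul, mul_one, smul_add, smul_smul]

variable {T : H →L[ℂ] H} {a : ℝ} {c : ℂ}

lemma Orthonormal.opNorm_eq_add_norm_of_apply_eq (hv : Orthonormal ℂ v) (hst : s ≠ t)
    (ha : 0 ≤ a)
    (hT : ∀ φ, T φ = (a : ℂ) • φ + c • (⟪v t, φ⟫_ℂ • v s) + conj c • (⟪v s, φ⟫_ℂ • v t)) :
    ‖T‖ = a + ‖c‖ := by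
  refine le_antisymm (T.opNorm_le_bound (by positivity) fun φ ↦ ?_) ?_
  · calc ‖T φ‖ ≤ ‖(a : ℂ) • φ‖ + ‖c • (⟪v t, φ⟫_ℂ • v s) + conj c • (⟪v s, φ⟫_ℂ • v t)‖ := by
          rw [hT, add_assoc]; exact norm_add_le _ _
      _ ≤ a * ‖φ‖ + ‖c‖ * ‖φ‖ := by
          rw [norm_smul, Complex.norm_real, Real.norm_of_nonneg ha]
          exact add_le_add_right (hv.norm_smul_inner_add_le hst c φ) _
      _ = (a + ‖c‖) * ‖φ‖ := by ring
  · obtain ⟨φ, hφ, hφeig⟩ := hv.exists_smul_inner_add_eq_norm_smul hst c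
    have hTφ : T φ = ((a + ‖c‖ : ℝ) : ℂ) • φ := by
      rw [hT, add_assoc, hφeig, ← add_smul]; push_cast; rfl
    have := T.le_opNorm φ
    rw [hTφ, norm_smul, Complex.norm_real, Real.norm_of_nonneg (by positivity)] at this
    exact le_of_mul_le_mul_right this (norm_pos_iff.mpr hφ)

end RankTwoPerturbation

section PhaseIntegral

open Set

lemma norm_exp_I_mul_sub_mul (n m : ℕ) (x : ℝ) : ‖exp (I * ((n : ℂ) - m) * x)‖ = 1 := by
  rw [Complex.norm_exp]
  simp

lemma phaseInt_swap (X : Set ℝ) (n m : ℕ) : phaseInt X m n = conj (phaseInt X n m) := by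
  simp only [phaseInt, map_mul, Complex.conj_ofReal, ← integral_conj, ← Complex.exp_conj,
    map_sub, Complex.conj_I, Complex.conj_ofReal, Complex.conj_natCast]
  congr 2 with x
  ring_nf

lemma setIntegral_Ico_exp_I_mul_sub_mul_eq_zero {n m : ℕ} (hnm : n ≠ m) :
    ∫ x in Ico 0 (2 * Real.pi), exp (I * ((n : ℂ) - m) * x) = 0 := by
  have hk : I * ((n : ℂ) - m) ≠ 0 := by
    simpa [sub_eq_zero, Complex.I_ne_zero] using hnm
  rw [integral_Ico_eq_integral_Ioo, ← integral_Ioc_eq_integral_Ioo,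
    ← intervalIntegral.integral_of_le Real.two_pi_pos.le, integral_exp_mul_complex hk]
  have hperiod : exp (I * ((n : ℂ) - m) * (2 * Real.pi)) = 1 := by
    rw [← Complex.exp_int_mul_two_pi_mul_I ((n : ℤ) - m)]
    push_cast
    ring_nf
  simp [hperiod]

lemma norm_phaseInt_le_one_sub {X : Set ℝ} {n m : ℕ} (hnm : n ≠ m) (hX : MeasurableSet X)
    (hXI : X ⊆ Ico 0 (2 * Real.pi)) :
    ‖phaseInt X n m‖ ≤ 1 - volume.real X / (2 * Real.pi) := by
  have hcont : Continuous fun x : ℝ ↦ exp (I * ((n : ℂ) - m) * x) := by fun_prop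
  have hI : ‖∫ x in X, exp (I * ((n : ℂ) - m) * x)‖ ≤ 2 * Real.pi - volume.real X := by
    have := norm_integral_sub_setIntegral_le (μ := volume.restrict (Ico 0 (2 * Real.pi))) (C := 1)
      (ae_of_all _ fun x ↦ (norm_exp_I_mul_sub_mul n m x).le) hX
      (hcont.integrableOn_Icc.mono_set Ico_subset_Icc_self)
    rwa [setIntegral_Ico_exp_I_mul_sub_mul_eq_zero hnm, zero_sub, norm_neg,
      Measure.restrict_restrict hX, inter_eq_self_of_subset_left hXI,
      measureReal_restrict_apply hX.compl, inter_comm, ← sdiff_eq,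
      measureReal_sdiff hXI hX measure_Ico_lt_top.ne,
      Real.volume_real_Ico_of_le Real.two_pi_pos.le, sub_zero, mul_one] at this
  rw [phaseInt, norm_mul, Complex.norm_real, Real.norm_of_nonneg (by positivity)]
  calc 1 / (2 * Real.pi) * ‖∫ x in X, exp (I * ((n : ℂ) - m) * x)‖
      ≤ 1 / (2 * Real.pi) * (2 * Real.pi - volume.real X) := by gcongr
    _ = 1 - volume.real X / (2 * Real.pi) := by field_simp

end PhaseIntegral

theorem stmt16 {H : Type*} [NormedAddCommGroup H] [InnerProductSpace ℂ H]
    (e : HilbertBasis ℕ ℂ H) (s t : ℕ) (hst : s ≠ t)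
    (w : ℂ) (hw : ‖w‖ < 1)
    (E : Set ℝ → (H →L[ℂ] H))
    (hE : ∀ X : Set ℝ, MeasurableSet X → X ⊆ Set.Ico 0 (2 * Real.pi) → ∀ φ : H,
      E X φ = (((volume X).toReal / (2 * Real.pi) : ℝ) : ℂ) • φ
        + (w * phaseInt X s t) • ((inner ℂ (e t) φ : ℂ) • (e s : H))
        + ((starRingEnd ℂ) w * phaseInt X t s) • ((inner ℂ (e s) φ : ℂ) • (e t : H))) :
    ∀ X : Set ℝ, MeasurableSet X → X ⊆ Set.Ico 0 (2 * Real.pi) →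
      ‖E X‖ = (volume X).toReal / (2 * Real.pi) + ‖w‖ * ‖phaseInt X s t‖
      ∧ (E X ≠ 1 → ‖E X‖ < 1) := by
  intro X hX hXI
  have hnorm : ‖E X‖ = (volume X).toReal / (2 * Real.pi) + ‖w‖ * ‖phaseInt X s t‖ := by
    rw [← norm_mul]
    refine e.orthonormal.opNorm_eq_add_norm_of_apply_eq hst (by positivity) fun φ ↦ ?_
    rw [hE X hX hXI φ, phaseInt_swap X s t, map_mul]
  refine ⟨hnorm, fun hne ↦ hnorm ▸ lt_of_not_ge fun hge ↦ hne ?_⟩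
  have hp : ‖phaseInt X s t‖ ≤ 1 - (volume X).toReal / (2 * Real.pi) :=
    norm_phaseInt_le_one_sub hst hX hXI
  have hp0 : phaseInt X s t = 0 := by
    refine norm_le_zero_iff.mp (le_of_not_gt fun hpos ↦ ?_)
    nlinarith [mul_pos (sub_pos.mpr hw) hpos]
  have ha : (volume X).toReal / (2 * Real.pi) = 1 := by
    rw [hp0, norm_zero] at hge hp
    linarith
  ext φ
  simp [hE X hX hXI φ, phaseInt_swap X s t, hp0, ha]
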